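/- For the Funk metric F on the unit ball and any constant vector a ∈ ℝⁿ with |a| < 1, the function F̃(x,y) = ((1 − ⟨a,x⟩)F² − ⟨a,y⟩F)/√(|y|² − (|x|²|y|² − ⟨x,y⟩²)) equals F + Σᵢ F_{xⁱ}(xⁱ − aⁱ) = F + F·Σᵢ F_{yⁱ}(xⁱ − aⁱ), for |x| < 1 and y ≠ 0. -/

import Mathlib

/-!
With `R` the radicand, `F = (√R + ⟪x, y⟫) / (1 - ‖x‖²)`. Differentiating gives
`D_y F = (⟪y, ·⟫ + F ⟪x, ·⟫) / √R` and, after eliminating `(√R)² = R`, Funk's equation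
`D_x F = F • D_y F`. The coordinate sums are the derivatives in the direction `x - a`, and the
first identity reduces to `F (1 - ‖x‖²) = √R + ⟪x, y⟫`.
-/

open scoped RealInnerProductSpace

/-- The Funk metric of the unit ball in ℝⁿ. -/
noncomputable def funkF {n : ℕ} (x y : EuclideanSpace ℝ (Fin n)) : ℝ :=
  (Real.sqrt (‖y‖ ^ 2 - (‖x‖ ^ 2 * ‖y‖ ^ 2 - ⟪x, y⟫ ^ 2)) + ⟪x, y⟫) / (1 - ‖x‖ ^ 2)

theorem EuclideanSpace.sum_apply_single_mul {𝕜 ι : Type*} [RCLike 𝕜] [Fintype ι] [DecidableEq ι]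
    (L : EuclideanSpace 𝕜 ι →ₗ[𝕜] 𝕜) (v : EuclideanSpace 𝕜 ι) :
    ∑ i, L (EuclideanSpace.single i 1) * v i = L v := by
  conv_rhs => rw [← (EuclideanSpace.basisFun ι 𝕜).sum_repr v]
  simp [mul_comm]

section Funk

variable {n : ℕ} {x y : EuclideanSpace ℝ (Fin n)}

noncomputable def funkRadicand (x y : EuclideanSpace ℝ (Fin n)) : ℝ :=
  ‖y‖ ^ 2 - (‖x‖ ^ 2 * ‖y‖ ^ 2 - ⟪x, y⟫ ^ 2)

theorem funkF_eq_mul_inv (x y : EuclideanSpace ℝ (Fin n)) :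
    funkF x y = (√(funkRadicand x y) + ⟪x, y⟫) * (1 - ‖x‖ ^ 2)⁻¹ :=
  div_eq_mul_inv _ _

theorem funkF_mul_one_sub_norm_sq (hx : ‖x‖ < 1) :
    funkF x y * (1 - ‖x‖ ^ 2) = √(funkRadicand x y) + ⟪x, y⟫ :=
  div_mul_cancel₀ _ (by nlinarith [norm_nonneg x])

theorem funkRadicand_pos (hx : ‖x‖ < 1) (hy : y ≠ 0) : 0 < funkRadicand x y := by
  have : 0 < ‖y‖ ^ 2 * (1 - ‖x‖ ^ 2) := by
    have := norm_pos_iff.2 hy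
    have : ‖x‖ ^ 2 < 1 := by nlinarith [norm_nonneg x]
    positivity
  unfold funkRadicand
  nlinarith [sq_nonneg ⟪x, y⟫]

variable (x y) in
theorem hasFDerivAt_funkRadicand_fst :
    HasFDerivAt (funkRadicand · y) (2 • (⟪x, y⟫ • innerSL ℝ y - ‖y‖ ^ 2 • innerSL ℝ x)) x := by
  have hxy : HasFDerivAt (⟪·, y⟫) (innerSL ℝ y) x :=
    (innerSL ℝ y).hasFDerivAt.congr_of_eventuallyEq (.of_forall fun z => real_inner_comm y z)
  refine ((hasFDerivAt_const _ x).sub (((hasStrictFDerivAt_norm_sq x).hasFDerivAt.mul_const _).sub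
    (hxy.pow 2))).congr_fderiv ?_
  ext v
  simp only [Nat.add_one_sub_one, pow_one, nsmul_eq_mul, Nat.cast_ofNat, zero_sub, neg_sub,
    sub_apply, smul_apply, coe_innerSL_apply, smul_eq_mul]
  ring

variable (x y) in
theorem hasFDerivAt_funkRadicand_snd :
    HasFDerivAt (funkRadicand x) (2 • ((1 - ‖x‖ ^ 2) • innerSL ℝ y + ⟪x, y⟫ • innerSL ℝ x)) y := by
  refine ((hasStrictFDerivAt_norm_sq y).hasFDerivAt.sub
    (((hasStrictFDerivAt_norm_sq y).hasFDerivAt.const_mul _).sub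
      ((innerSL ℝ x).hasFDerivAt.pow 2))).congr_fderiv ?_
  ext v
  simp only [coe_innerSL_apply, Nat.add_one_sub_one, pow_one, nsmul_eq_mul, Nat.cast_ofNat,
    sub_apply, smul_apply, smul_eq_mul, smul_add, add_apply]
  ring

theorem hasFDerivAt_funkF_snd (hx : ‖x‖ < 1) (hy : y ≠ 0) :
    HasFDerivAt (funkF x)
      ((√(funkRadicand x y))⁻¹ • (innerSL ℝ y + funkF x y • innerSL ℝ x)) y := by
  have hs : 0 < √(funkRadicand x y) := Real.sqrt_pos.2 (funkRadicand_pos hx hy)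
  have hc : 1 - ‖x‖ ^ 2 ≠ 0 := by nlinarith [norm_nonneg x]
  rw [funext (funkF_eq_mul_inv x)]
  refine ((((hasFDerivAt_funkRadicand_snd x y).sqrt (funkRadicand_pos hx hy).ne').add
    (innerSL ℝ x).hasFDerivAt).mul_const _).congr_fderiv ?_
  ext v
  simp only [one_div, mul_inv_rev, smul_add, add_apply, smul_apply, coe_innerSL_apply,
    smul_eq_mul, nsmul_eq_mul, Nat.cast_ofNat]
  field_simp
  ring

theorem hasFDerivAt_funkF_fst (hx : ‖x‖ < 1) (hy : y ≠ 0) :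
    HasFDerivAt (funkF · y)
      (funkF x y • (√(funkRadicand x y))⁻¹ • (innerSL ℝ y + funkF x y • innerSL ℝ x)) x := by
  have hR := funkRadicand_pos hx hy
  have hs : 0 < √(funkRadicand x y) := Real.sqrt_pos.2 hR
  have hc : 1 - ‖x‖ ^ 2 ≠ 0 := by nlinarith [norm_nonneg x]
  have hxy : HasFDerivAt (⟪·, y⟫) (innerSL ℝ y) x :=
    (innerSL ℝ y).hasFDerivAt.congr_of_eventuallyEq (.of_forall fun z => real_inner_comm y z)
  have hinv := (hasDerivAt_inv hc).comp_hasFDerivAt x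
    ((hasFDerivAt_const 1 x).sub (hasStrictFDerivAt_norm_sq x).hasFDerivAt)
  rw [funext (funkF_eq_mul_inv · y)]
  refine ((((hasFDerivAt_funkRadicand_fst x y).sqrt hR.ne').add hxy).mul hinv).congr_fderiv ?_
  ext v
  simp only [funkF_eq_mul_inv, Pi.add_apply, zero_sub, smul_neg, neg_smul, neg_neg,
    Function.comp_apply, Pi.sub_apply, one_div, mul_inv_rev, smul_add, add_apply, smul_apply,
    coe_innerSL_apply, nsmul_eq_mul, Nat.cast_ofNat, smul_eq_mul, sub_apply]
  field_simp
  have hsq : √(funkRadicand x y) ^ 2 = ‖y‖ ^ 2 - (‖x‖ ^ 2 * ‖y‖ ^ 2 - ⟪x, y⟫ ^ 2) :=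
    Real.sq_sqrt hR.le
  linear_combination ⟪x, v⟫ * hsq

theorem fderiv_funkF_fst_eq_smul (hx : ‖x‖ < 1) (hy : y ≠ 0) :
    fderiv ℝ (funkF · y) x = funkF x y • fderiv ℝ (funkF x) y := by
  rw [(hasFDerivAt_funkF_fst hx hy).fderiv, (hasFDerivAt_funkF_snd hx hy).fderiv]

end Funk

theorem funk_tilde_a_formula_general {n : ℕ} (a x y : EuclideanSpace ℝ (Fin n))
    (hx : ‖x‖ < 1) (hy : y ≠ 0) :
    (((1 - ⟪a, x⟫) * funkF x y ^ 2 - ⟪a, y⟫ * funkF x y)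
        / Real.sqrt (‖y‖ ^ 2 - (‖x‖ ^ 2 * ‖y‖ ^ 2 - ⟪x, y⟫ ^ 2))
      = funkF x y + ∑ i,
          fderiv ℝ (fun x' => funkF x' y) x (EuclideanSpace.single i 1) * (x i - a i)) ∧
    (funkF x y + ∑ i,
        fderiv ℝ (fun x' => funkF x' y) x (EuclideanSpace.single i 1) * (x i - a i)
      = funkF x y + funkF x y * ∑ i,
          fderiv ℝ (fun y' => funkF x y') y (EuclideanSpace.single i 1) * (x i - a i)) := by
  have hsum (L : EuclideanSpace ℝ (Fin n) →L[ℝ] ℝ) :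
      ∑ i, L (EuclideanSpace.single i 1) * (x i - a i) = L (x - a) := by
    simpa using EuclideanSpace.sum_apply_single_mul L.toLinearMap (x - a)
  refine ⟨?_, by rw [hsum, hsum, fderiv_funkF_fst_eq_smul hx hy]; rfl⟩
  have hs : 0 < √(funkRadicand x y) := Real.sqrt_pos.2 (funkRadicand_pos hx hy)
  have hF := funkF_mul_one_sub_norm_sq (y := y) hx
  rw [hsum, (hasFDerivAt_funkF_fst hx hy).fderiv]
  change _ / √(funkRadicand x y) = _
  simp only [smul_apply, add_apply, innerSL_apply_apply, inner_sub_right,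
    real_inner_self_eq_norm_sq, real_inner_comm a x, real_inner_comm x y, real_inner_comm a y,
    smul_eq_mul]
  field_simp
  linear_combination funkF x y * hF

/-- For any `a` with `|a| < 1`, the explicit metric
`((1 - ⟨a,x⟩)F² - ⟨a,y⟩F)/√(|y|² - (|x|²|y|² - ⟨x,y⟩²))` equals
`F + Σᵢ F_{xⁱ}(xⁱ - aⁱ) = F + F·Σᵢ F_{yⁱ}(xⁱ - aⁱ)`. -/
theorem funk_tilde_a_formula {n : ℕ} (a x y : EuclideanSpace ℝ (Fin n))
    (ha : ‖a‖ < 1) (hx : ‖x‖ < 1) (hy : y ≠ 0) :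
    (((1 - ⟪a, x⟫) * funkF x y ^ 2 - ⟪a, y⟫ * funkF x y)
        / Real.sqrt (‖y‖ ^ 2 - (‖x‖ ^ 2 * ‖y‖ ^ 2 - ⟪x, y⟫ ^ 2))
      = funkF x y + ∑ i,
          fderiv ℝ (fun x' => funkF x' y) x (EuclideanSpace.single i 1) * (x i - a i)) ∧
    (funkF x y + ∑ i,
        fderiv ℝ (fun x' => funkF x' y) x (EuclideanSpace.single i 1) * (x i - a i)
      = funkF x y + funkF x y * ∑ i,
          fderiv ℝ (fun y' => funkF x y') y (EuclideanSpace.single i 1) * (x i - a i)) :=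
  funk_tilde_a_formula_general a x y hx hy
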